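/- arXiv:1205.2819 — 2 statements merged into one kernel-verified Lean document; each statement's English description precedes it below -/
import Mathlib

section
/- Let E be a group, G a normal subgroup of E, H an almost normal subgroup of G, and σ : E/G → E a cross-section of the quotient map consistent with the Hecke pair (G,H). Then for every g ∈ G and every x ∈ E/G one has H ∩ gHg⁻¹ ⊆ H ∩ (gσ(x))H(gσ(x))⁻¹; consequently H is an almost normal subgroup of E. -/
noncomputable section

namespace HeckeRDPaper

/-- The conjugate subgroup `gHg⁻¹`. -/
def conjS {G : Type*} [Group G] (g : G) (H : Subgroup G) : Subgroup G :=
  Subgroup.map (MulAut.conj g).toMonoidHom H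

/-- `H` is an almost normal subgroup of `G`: the index `|H : H ∩ gHg⁻¹|` is finite
for every `g ∈ G`. -/
def AlmostNormal {G : Type*} [Group G] (H : Subgroup G) : Prop :=
  ∀ g : G, (conjS g H).relIndex H ≠ 0

/-- `H` and `K` are strongly commensurable: `H ∩ K` has finite index in both `H` and `K`. -/
def StronglyCommensurable {G : Type*} [Group G] (H K : Subgroup G) : Prop :=
  (H ⊓ K).relIndex H ≠ 0 ∧ (H ⊓ K).relIndex K ≠ 0

/-- `H` and `K` are commensurable: `H` and `gKg⁻¹` are strongly commensurable
for some `g ∈ G`. -/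
def Commens {G : Type*} [Group G] (H K : Subgroup G) : Prop :=
  ∃ g : G, StronglyCommensurable H (conjS g K)

/-- A length function on a group `G`. -/
structure IsLengthFunction {G : Type*} [Group G] (L : G → ℝ) : Prop where
  nonneg : ∀ g, 0 ≤ L g
  map_one : L 1 = 0
  map_inv : ∀ g, L g⁻¹ = L g
  subadd : ∀ g h, L (g * h) ≤ L g + L h

/-- A length function on the Hecke pair `(G, H)`: a length function on `G`
vanishing on `H`. -/
def IsHeckeLength {G : Type*} [Group G] (H : Subgroup G) (L : G → ℝ) : Prop :=
  IsLengthFunction L ∧ ∀ h ∈ H, L h = 0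

/-- `L₁` dominates `L₂` if `L₂ ≤ a L₁ + b` for some positive constants `a`, `b`. -/
def Dominates {G : Type*} [Group G] (L₁ L₂ : G → ℝ) : Prop :=
  ∃ a b : ℝ, 0 < a ∧ 0 < b ∧ ∀ g, L₂ g ≤ a * L₁ g + b

/-- Two length functions are equivalent if they dominate each other. -/
def EquivLen {G : Type*} [Group G] (L₁ L₂ : G → ℝ) : Prop :=
  Dominates L₁ L₂ ∧ Dominates L₂ L₁

/-- The set `H\G` of right cosets of `H` in `G`. -/
abbrev RCos {G : Type*} [Group G] (H : Subgroup G) := Quotient (QuotientGroup.rightRel H)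

/-- The `ℓ²`-norm over the right cosets `H\G` of a (left `H`-invariant) function on `G`,
computed using the set of representatives given by `Quotient.out`. -/
def l2 {G : Type*} [Group G] (H : Subgroup G) (f : G → ℝ) : ℝ :=
  Real.sqrt (∑' x : RCos H, f x.out ^ 2)

/-- The convolution `(f∗k)(g) = Σ_{x ∈ ⟨H\G⟩} f(gx⁻¹) k(x)`, the sum being over the
set of representatives of the right cosets of `H` given by `Quotient.out`. -/
def conv {G : Type*} [Group G] (H : Subgroup G) (f k : G → ℝ) : G → ℝ :=
  fun g => ∑' x : RCos H, f (g * x.out⁻¹) * k x.out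

/-- `f` is supported on finitely many double cosets of `H`. -/
def FinDosetSupp {G : Type*} [Group G] (H : Subgroup G) (f : G → ℝ) : Prop :=
  {s : Set G | ∃ g : G, f g ≠ 0 ∧
    s = {y : G | ∃ h₁ ∈ H, ∃ h₂ ∈ H, y = h₁ * g * h₂}}.Finite

/-- The Hecke pair `(G, H)` has property (RD) with respect to the length function `L`:
there is a polynomial `P` such that `‖f∗k‖₂ ≤ P(r) ‖f‖₂ ‖k‖₂` for every `r > 0`,
every nonnegative `H`-bi-invariant `f` supported on finitely many double cosets and
with `L ≤ r` on its support, and every nonnegative left-`H`-invariant square-summable `k`. -/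
def HeckeRDwrt {G : Type*} [Group G] (H : Subgroup G) (L : G → ℝ) : Prop :=
  ∃ P : Polynomial ℝ, ∀ r : ℝ, 0 < r → ∀ f k : G → ℝ,
    (∀ g, 0 ≤ f g) →
    (∀ g : G, ∀ h₁ ∈ H, ∀ h₂ ∈ H, f (h₁ * g * h₂) = f g) →
    FinDosetSupp H f →
    (∀ g, f g ≠ 0 → L g ≤ r) →
    (∀ g, 0 ≤ k g) →
    (∀ g : G, ∀ h ∈ H, k (h * g) = k g) →
    Summable (fun x : RCos H => k x.out ^ 2) →
    l2 H (conv H f k) ≤ P.eval r * l2 H f * l2 H k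

/-- The Hecke pair `(G, H)` has property (RD): it has property (RD) with respect to
some length function on `(G, H)`. -/
def HeckeRD {G : Type*} [Group G] (H : Subgroup G) : Prop :=
  ∃ L : G → ℝ, IsHeckeLength H L ∧ HeckeRDwrt H L

/-- A group has property (RD) with respect to `L` if the Hecke pair `(Γ, {1})` does. -/
def GroupRDwrt (Γ : Type*) [Group Γ] (L : Γ → ℝ) : Prop :=
  HeckeRDwrt (⊥ : Subgroup Γ) L

/-- A group has property (RD) if the Hecke pair `(Γ, {1})` does. -/
def GroupRD (Γ : Type*) [Group Γ] : Prop :=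
  HeckeRD (⊥ : Subgroup Γ)

/-- A set-theoretic cross-section `σ : E/N → E` of the quotient map which is
consistent with the Hecke pair `(·, H)`, i.e. `π ∘ σ = id`, `σ(1) = 1` and
`σ(x) H σ(x)⁻¹ = H` for all `x ∈ E/N`. -/
def ConsistentSection {E : Type*} [Group E] (N : Subgroup E) [N.Normal] (H : Subgroup E)
    (σ : E ⧸ N → E) : Prop :=
  (∀ x : E ⧸ N, (QuotientGroup.mk (σ x) : E ⧸ N) = x) ∧ σ 1 = 1 ∧
    ∀ x : E ⧸ N, ∀ h : E, h ∈ H ↔ σ x * h * (σ x)⁻¹ ∈ H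

end HeckeRDPaper

/-!
Conjugation by `σ(x)` fixes `H`, so `gσ(x)` and `g` conjugate `H` to the same subgroup. Every
`e ∈ E` factors as `(e σ(ē)⁻¹) σ(ē)` with first factor in `G`, so `|H : H ∩ eHe⁻¹|` is an index
of the form `|H : H ∩ gHg⁻¹|` with `g ∈ G`, finite by almost normality of `H` in `G`.
-/

namespace HeckeRDPaper

variable {E : Type*} [Group E]

theorem mem_conjS_iff {g x : E} {H : Subgroup E} : x ∈ conjS g H ↔ g⁻¹ * x * g ∈ H := by
  constructor
  · rintro ⟨a, ha, rfl⟩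
    simpa [MulAut.conj, mul_assoc] using ha
  · intro h
    exact ⟨g⁻¹ * x * g, h, by simp [MulAut.conj, mul_assoc]⟩

theorem conjS_mul (a b : E) (H : Subgroup E) : conjS (a * b) H = conjS a (conjS b H) := by
  ext x
  simp only [mem_conjS_iff, mul_inv_rev, mul_assoc]

theorem conjS_eq_self_of_mem_normalizer {s : E} {H : Subgroup E}
    (hs : s ∈ Subgroup.normalizer (H : Set E)) : conjS s H = H :=
  Subgroup.mem_normalizer_iff_map_conj_eq.mp hs

theorem conjS_mul_of_mem_normalizer (g : E) {s : E} {H : Subgroup E}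
    (hs : s ∈ Subgroup.normalizer (H : Set E)) : conjS (g * s) H = conjS g H := by
  rw [conjS_mul, conjS_eq_self_of_mem_normalizer hs]

theorem conjS_subgroupOf {G H : Subgroup E} {g : E} (hg : g ∈ G) :
    (conjS g H).subgroupOf G = conjS (⟨g, hg⟩ : G) (H.subgroupOf G) := by
  ext y
  simp only [Subgroup.mem_subgroupOf, mem_conjS_iff]
  rfl

theorem AlmostNormal.relIndex_conjS_ne_zero {G H : Subgroup E} (hHG : H ≤ G)
    (hAN : AlmostNormal (H.subgroupOf G)) {g : E} (hg : g ∈ G) :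
    (conjS g H).relIndex H ≠ 0 := by
  rw [← Subgroup.relIndex_subgroupOf hHG, conjS_subgroupOf hg]
  exact hAN ⟨g, hg⟩

namespace ConsistentSection

variable {G H : Subgroup E} [G.Normal] {σ : E ⧸ G → E}

theorem mem_normalizer (hσ : ConsistentSection G H σ) (x : E ⧸ G) :
    σ x ∈ Subgroup.normalizer (H : Set E) :=
  Subgroup.mem_normalizer_iff.mpr (hσ.2.2 x)

theorem mul_inv_mem (hσ : ConsistentSection G H σ) (e : E) : e * (σ e)⁻¹ ∈ G := by
  rw [← QuotientGroup.eq_one_iff, QuotientGroup.mk_mul, QuotientGroup.mk_inv, hσ.1, mul_inv_cancel]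

end ConsistentSection

end HeckeRDPaper

open HeckeRDPaper in
/-- For a consistent cross-section, `H ∩ gHg⁻¹ ⊆ H ∩ (gσ(x))H(gσ(x))⁻¹`
for all `g ∈ G`, `x ∈ E/G`; consequently `H` is almost normal in `E`. -/
theorem stmt12 {E : Type*} [Group E] (G H : Subgroup E) [G.Normal] (hHG : H ≤ G)
    (hAN : AlmostNormal (H.subgroupOf G))
    (σ : E ⧸ G → E) (hσ : ConsistentSection G H σ) :
    (∀ g ∈ G, ∀ x : E ⧸ G, H ⊓ conjS g H ≤ H ⊓ conjS (g * σ x) H) ∧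
      AlmostNormal H := by
  have hconj (g : E) (x : E ⧸ G) : conjS (g * σ x) H = conjS g H :=
    conjS_mul_of_mem_normalizer g (hσ.mem_normalizer x)
  refine ⟨fun g _ x => by rw [hconj], fun e => ?_⟩
  rw [← inv_mul_cancel_right e (σ e), hconj]
  exact hAN.relIndex_conjS_ne_zero hHG (hσ.mul_inv_mem e)
end
end

section
/- Let E be a group, G a normal subgroup of E, H an almost normal subgroup of G, and σ : E/G → E a cross-section of the quotient map consistent with the Hecke pair (G,H). Then the map (Hg, x) ↦ H(gσ(x)) is a well-defined bijection from (H\G) × (E/G) onto the set H\E of right cosets of H in E. -/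
noncomputable section

/-! Every `e ∈ E` factors uniquely as `e = g σ(x)` with `g ∈ G`, namely `x = eG` and
`g = e σ(eG)⁻¹`. Since `H ≤ G`, two such products lie in the same right `H`-coset only if
they have the same image in `E/G`, i.e. the same `σ(x)`, and then the coset is decided
by `g` alone. -/

section CrossSection

variable {E : Type*} [Group E] {N : Subgroup E} [N.Normal]

theorem mul_mul_inv_mul_mem_iff_mk_eq {g₁ g₂ : E} (hg₁ : g₁ ∈ N) (hg₂ : g₂ ∈ N) (a b : E) :
    g₁ * a * (g₂ * b)⁻¹ ∈ N ↔ (a : E ⧸ N) = b := by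
  rw [← QuotientGroup.eq_one_iff, QuotientGroup.mk_mul, QuotientGroup.mk_inv,
    QuotientGroup.mk_mul, QuotientGroup.mk_mul, (QuotientGroup.eq_one_iff _).mpr hg₁,
    (QuotientGroup.eq_one_iff _).mpr hg₂, one_mul, one_mul, mul_inv_eq_one]

theorem mul_inv_section_mk_mem {σ : E ⧸ N → E} (hσ : ∀ x, (σ x : E ⧸ N) = x) (e : E) :
    e * (σ e)⁻¹ ∈ N := by
  simpa only [div_eq_mul_inv] using QuotientGroup.eq_iff_div_mem.mp (hσ e).symm

end CrossSection

open HeckeRDPaper in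
theorem stmt15_general {E : Type*} [Group E] (G H : Subgroup E) [G.Normal] (hHG : H ≤ G)
    (σ : E ⧸ G → E) (hσ : ConsistentSection G H σ) :
    -- well defined and injective: `H(g₁σ(x₁)) = H(g₂σ(x₂))` iff `Hg₁ = Hg₂` and `x₁ = x₂`
    (∀ g₁ ∈ G, ∀ g₂ ∈ G, ∀ x₁ x₂ : E ⧸ G,
      ((g₁ * σ x₁) * (g₂ * σ x₂)⁻¹ ∈ H ↔ (g₁ * g₂⁻¹ ∈ H ∧ x₁ = x₂))) ∧
    -- surjective: every right coset of `H` in `E` is of the form `H(gσ(x))`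
    (∀ e : E, ∃ g ∈ G, ∃ x : E ⧸ G, (g * σ x) * e⁻¹ ∈ H) := by
  obtain ⟨hsec, -, -⟩ := hσ
  refine ⟨fun g₁ hg₁ g₂ hg₂ x₁ x₂ => ⟨fun hmem => ?_, ?_⟩, fun e => ?_⟩
  · have hx : x₁ = x₂ := by
      rw [← hsec x₁, ← hsec x₂]
      exact (mul_mul_inv_mul_mem_iff_mk_eq hg₁ hg₂ _ _).mp (hHG hmem)
    subst hx
    exact ⟨by rwa [mul_inv_rev, mul_mul_inv_mul_cancel] at hmem, rfl⟩
  · rintro ⟨hH, rfl⟩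
    rwa [mul_inv_rev, mul_mul_inv_mul_cancel]
  · refine ⟨e * (σ e)⁻¹, mul_inv_section_mk_mem hsec e, e, ?_⟩
    rw [inv_mul_cancel_right, mul_inv_cancel]
    exact H.one_mem

open HeckeRDPaper in
/-- For a consistent cross-section, `(Hg, x) ↦ H(gσ(x))` is a well-defined
bijection from `(H\G) × (E/G)` onto `H\E`. -/
theorem stmt15 {E : Type*} [Group E] (G H : Subgroup E) [G.Normal] (hHG : H ≤ G)
    (hAN : AlmostNormal (H.subgroupOf G))
    (σ : E ⧸ G → E) (hσ : ConsistentSection G H σ) :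
    -- well defined and injective: `H(g₁σ(x₁)) = H(g₂σ(x₂))` iff `Hg₁ = Hg₂` and `x₁ = x₂`
    (∀ g₁ ∈ G, ∀ g₂ ∈ G, ∀ x₁ x₂ : E ⧸ G,
      ((g₁ * σ x₁) * (g₂ * σ x₂)⁻¹ ∈ H ↔ (g₁ * g₂⁻¹ ∈ H ∧ x₁ = x₂))) ∧
    -- surjective: every right coset of `H` in `E` is of the form `H(gσ(x))`
    (∀ e : E, ∃ g ∈ G, ∃ x : E ⧸ G, (g * σ x) * e⁻¹ ∈ H) :=
  stmt15_general G H hHG σ hσ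
end
end
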